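/- For nonnegative integers p ≤ n, the p-th derivative of the Eulerian polynomial at t = 1 satisfies A_n^{(p)}(1) = p! · ∑_{k=0}^{p} (-1)^k (n-k)! · S(n, n-k) · C(n-k, p-k), where S denotes Stirling numbers of the second kind and C denotes binomial coefficients. -/

import Mathlib

/-!
Taylor-expanding at `1`, the `p`-th derivative at `1` is `p!` times the coefficient of `s ^ p`
in the polynomial in `s = t - 1`. The term `t^k (1-t)^{n-k}` becomes `(-1)^{n-k} s^{n-k} (1+s)^k`,
whose `s ^ p`-coefficient is `(-1)^{n-k} C(k, p-(n-k))`; reindexing `k ↦ n - k` gives the formula.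
-/

/-- Stirling numbers of the second kind. -/
def stirling2 : ℕ → ℕ → ℕ
  | 0, 0 => 1
  | 0, _ + 1 => 0
  | _ + 1, 0 => 0
  | n + 1, k + 1 => (k + 1) * stirling2 n (k + 1) + stirling2 n k

/-- The Eulerian polynomial `A_n(t) = ∑_{k=0}^{n} k! S(n,k) t^k (1-t)^{n-k}`. -/
noncomputable def eulerianPoly (n : ℕ) : Polynomial ℝ :=
  ∑ k ∈ Finset.range (n + 1),
    Polynomial.C ((Nat.factorial k * stirling2 n k : ℕ) : ℝ) * Polynomial.X ^ k *
      (1 - Polynomial.X) ^ (n - k)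

open Polynomial Finset

namespace Polynomial

variable {R : Type*}

theorem eval_iterate_derivative_eq_factorial_mul_taylor_coeff [CommSemiring R]
    (f : R[X]) (r : R) (p : ℕ) :
    (derivative^[p] f).eval r = p.factorial * (taylor r f).coeff p := by
  rw [taylor_coeff, ← factorial_smul_hasseDeriv, LinearMap.smul_apply, eval_smul, nsmul_eq_mul]

theorem eval_one_iterate_derivative_X_pow_mul_one_sub_X_pow [CommRing R] (k m p : ℕ) :
    (derivative^[p] (X ^ k * (1 - X) ^ m : R[X])).eval 1
      = if m ≤ p then (-1 : R) ^ m * p.factorial * k.choose (p - m) else 0 := by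
  have h : taylor (1 : R) (X ^ k * (1 - X) ^ m) = C ((-1) ^ m) * (X ^ m * (X + 1) ^ k) := by
    rw [taylor_mul, taylor_pow, taylor_pow, map_sub, taylor_one, taylor_X, C_1]
    simp only [C_pow, C_neg, C_1]
    ring
  rw [eval_iterate_derivative_eq_factorial_mul_taylor_coeff, h, coeff_C_mul, coeff_X_pow_mul',
    coeff_X_add_one_pow]
  split_ifs <;> ring

end Polynomial

theorem eulerian_iterated_deriv_at_one (n p : ℕ) (hpn : p ≤ n) :
    (Polynomial.derivative^[p] (eulerianPoly n)).eval 1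
      = (Nat.factorial p : ℝ) * ∑ k ∈ Finset.range (p + 1),
          (-1 : ℝ) ^ k * (Nat.factorial (n - k) : ℝ) * (stirling2 n (n - k) : ℝ) *
            (Nat.choose (n - k) (p - k) : ℝ) := by
  have hfilter : (range (n + 1)).filter (· ≤ p) = range (p + 1) := by
    ext j; simp only [mem_filter, mem_range]; omega
  simp only [eulerianPoly, mul_assoc, iterate_derivative_sum, iterate_derivative_C_mul,
    eval_finsetSum, eval_mul, eval_C, eval_one_iterate_derivative_X_pow_mul_one_sub_X_pow]
  rw [← sum_range_reflect, ← hfilter, sum_filter, mul_sum]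
  refine sum_congr rfl fun j hj => ?_
  rw [mem_range] at hj
  rw [show n + 1 - 1 - j = n - j by omega, show n - (n - j) = j by omega]
  split_ifs
  · push_cast; ring
  · simp
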